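/- (Lemma 2) There exists r : Fin N such that ‖ψ_r^(k) − φ^(k)‖ ≤ 2*k/√N. -/

import Mathlib

/-!
Hybrid argument. Replacing the oracle calls one at a time, the final states of the runs with
and without the oracle `O_r` differ by at most `∑ᵢ ‖O_r φ⁽ⁱ⁾ - φ⁽ⁱ⁾‖ = 2 ∑ᵢ ‖Π_r φ⁽ⁱ⁾‖`, since
the oracle and the unitaries are isometries. The projections `Π_r` split every unit vector into
orthogonal pieces, so `∑_r ‖Π_r φ⁽ⁱ⁾‖ ≤ √N` by Cauchy–Schwarz; summing over `i` and `r` gives a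
total deviation of at most `2k√N`, and some `r` is at most the average `2k/√N`.
-/

open Finset EuclideanSpace

theorem dist_le_sum_dist_of_hybrid {α : Type*} [PseudoMetricSpace α] {O : α → α}
    (hO : LipschitzWith 1 O) {U : ℕ → α → α} (hU : ∀ j, Isometry (U j)) {ψ φ : ℕ → α}
    (h0 : ψ 0 = φ 0) (hψ : ∀ j, ψ (j + 1) = U (j + 1) (O (ψ j)))
    (hφ : ∀ j, φ (j + 1) = U (j + 1) (φ j)) (k : ℕ) :
    dist (ψ k) (φ k) ≤ ∑ i ∈ range k, dist (O (φ i)) (φ i) := by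
  induction k with
  | zero => simp [h0]
  | succ k ih =>
    have hO' : dist (O (ψ k)) (O (φ k)) ≤ dist (ψ k) (φ k) := by
      simpa using hO.dist_le_mul (ψ k) (φ k)
    calc dist (ψ (k + 1)) (φ (k + 1)) = dist (O (ψ k)) (φ k) := by
          rw [hψ, hφ, (hU _).dist_eq]
      _ ≤ dist (O (ψ k)) (O (φ k)) + dist (O (φ k)) (φ k) := dist_triangle _ _ _
      _ ≤ ∑ i ∈ range (k + 1), dist (O (φ i)) (φ i) := by
          rw [sum_range_succ]; linarith

namespace EuclideanSpace

variable {𝕜 ι κ : Type*} [RCLike 𝕜] [DecidableEq κ]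

def fiberProj (f : ι → κ) (r : κ) (v : EuclideanSpace 𝕜 ι) : EuclideanSpace 𝕜 ι :=
  WithLp.toLp 2 fun i => if f i = r then v i else 0

def phaseOracle (f : ι → κ) (r : κ) (v : EuclideanSpace 𝕜 ι) : EuclideanSpace 𝕜 ι :=
  v - (2 : 𝕜) • fiberProj f r v

@[simp]
theorem fiberProj_apply (f : ι → κ) (r : κ) (v : EuclideanSpace 𝕜 ι) (i : ι) :
    fiberProj f r v i = if f i = r then v i else 0 :=
  rfl

theorem phaseOracle_apply (f : ι → κ) (r : κ) (v : EuclideanSpace 𝕜 ι) (i : ι) :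
    phaseOracle f r v i = if f i = r then -v i else v i := by
  simp only [phaseOracle, PiLp.sub_apply, PiLp.smul_apply, fiberProj_apply, smul_eq_mul]
  split_ifs <;> ring

variable [Fintype ι]

theorem norm_eq_of_forall_norm_apply_eq {u v : EuclideanSpace 𝕜 ι} (h : ∀ i, ‖u i‖ = ‖v i‖) :
    ‖u‖ = ‖v‖ := by
  simp only [norm_eq, h]

theorem isometry_phaseOracle (f : ι → κ) (r : κ) : Isometry (phaseOracle (𝕜 := 𝕜) f r) := by
  refine Isometry.of_dist_eq fun u v => ?_
  rw [dist_eq_norm, dist_eq_norm]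
  refine norm_eq_of_forall_norm_apply_eq fun i => ?_
  simp only [PiLp.sub_apply, phaseOracle_apply]
  split_ifs
  · rw [neg_sub_neg, norm_sub_rev]
  · rfl

theorem dist_phaseOracle_self (f : ι → κ) (r : κ) (v : EuclideanSpace 𝕜 ι) :
    dist (phaseOracle f r v) v = 2 * ‖fiberProj f r v‖ := by
  rw [dist_eq_norm, phaseOracle, sub_sub_cancel_left, norm_neg, norm_smul]
  norm_num

variable [Fintype κ]

theorem sum_norm_fiberProj_sq (f : ι → κ) (v : EuclideanSpace 𝕜 ι) :
    ∑ r, ‖fiberProj f r v‖ ^ 2 = ‖v‖ ^ 2 := by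
  simp only [norm_sq_eq, fiberProj_apply, apply_ite (‖·‖ ^ 2), norm_zero]
  rw [sum_comm]
  simp

theorem sum_norm_fiberProj_le (f : ι → κ) (v : EuclideanSpace 𝕜 ι) :
    ∑ r, ‖fiberProj f r v‖ ≤ √(Fintype.card κ) * ‖v‖ := by
  simpa [sum_norm_fiberProj_sq] using
    Real.sum_mul_le_sqrt_mul_sqrt univ 1 fun r => ‖fiberProj f r v‖

end EuclideanSpace

theorem hybrid_exists_small_deviation_general
    (N : ℕ) (hN : 1 ≤ N) (W : Type) [Fintype W]
    (Pr : Fin N → EuclideanSpace ℂ (Fin N × W) → EuclideanSpace ℂ (Fin N × W))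
    (hPr : ∀ r v x, Pr r v x = if x.1 = r then v x else 0)
    (Or : Fin N → EuclideanSpace ℂ (Fin N × W) → EuclideanSpace ℂ (Fin N × W))
    (hOr : ∀ r v, Or r v = v - (2 : ℂ) • Pr r v)
    (k : ℕ)
    (U : ℕ → EuclideanSpace ℂ (Fin N × W) ≃ₗᵢ[ℂ] EuclideanSpace ℂ (Fin N × W))
    (v₀ : EuclideanSpace ℂ (Fin N × W)) (hv₀ : ‖v₀‖ = 1)
    (ψ : Fin N → ℕ → EuclideanSpace ℂ (Fin N × W))
    (hψ0 : ∀ r, ψ r 0 = U 0 v₀)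
    (hψ : ∀ r j, ψ r (j + 1) = U (j + 1) (Or r (ψ r j)))
    (φ : ℕ → EuclideanSpace ℂ (Fin N × W))
    (hφ0 : φ 0 = U 0 v₀)
    (hφ : ∀ j, φ (j + 1) = U (j + 1) (φ j)) :
    ∃ r : Fin N, ‖ψ r k - φ k‖ ≤ 2 * (k : ℝ) / Real.sqrt N := by
  have hPr' : Pr = fiberProj Prod.fst := by
    ext r v x
    rw [hPr, fiberProj_apply]
  have hOr' : Or = phaseOracle Prod.fst := by
    ext1 r; ext1 v
    rw [hOr, hPr', phaseOracle]
  subst hPr' hOr'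
  have hφ_norm : ∀ j, ‖φ j‖ = 1 := fun j => by
    induction j with
    | zero => rw [hφ0, LinearIsometryEquiv.norm_map, hv₀]
    | succ j ih => rw [hφ, LinearIsometryEquiv.norm_map, ih]
  have hdev : ∀ r, ‖ψ r k - φ k‖ ≤ 2 * ∑ i ∈ range k, ‖fiberProj Prod.fst r (φ i)‖ := fun r => by
    rw [← dist_eq_norm, mul_sum]
    simpa only [dist_phaseOracle_self] using
      dist_le_sum_dist_of_hybrid (isometry_phaseOracle _ r).lipschitz (fun j => (U j).isometry)
        (by rw [hψ0, hφ0]) (hψ r) hφ k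
  have htotal : ∑ r, ‖ψ r k - φ k‖ ≤ ∑ _r : Fin N, 2 * (k : ℝ) / √N := by
    calc ∑ r, ‖ψ r k - φ k‖
        ≤ 2 * ∑ i ∈ range k, ∑ r, ‖fiberProj Prod.fst r (φ i)‖ := by
          rw [sum_comm, mul_sum]; exact sum_le_sum fun r _ => hdev r
      _ ≤ 2 * ∑ i ∈ range k, √N := by
          gcongr with i
          simpa [hφ_norm i] using sum_norm_fiberProj_le Prod.fst (φ i)
      _ = ∑ _r : Fin N, 2 * (k : ℝ) / √N := by
          simp only [sum_const, card_range, card_univ, Fintype.card_fin, nsmul_eq_mul]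
          rw [mul_div_assoc', mul_comm (N : ℝ), mul_div_assoc, Real.div_sqrt, mul_assoc]
  have : Nonempty (Fin N) := Fin.pos_iff_nonempty.mp hN
  obtain ⟨r, -, hr⟩ := exists_le_of_sum_le univ_nonempty htotal
  exact ⟨r, hr⟩

/-- Lemma 2: there exists a marked item `r` whose run deviates from the
oracle-free run by at most `2k/√N`. -/
theorem hybrid_exists_small_deviation
    (N : ℕ) (hN : 1 ≤ N) (W : Type) [Fintype W] [Nonempty W]
    (Pr : Fin N → EuclideanSpace ℂ (Fin N × W) → EuclideanSpace ℂ (Fin N × W))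
    (hPr : ∀ r v x, Pr r v x = if x.1 = r then v x else 0)
    (Or : Fin N → EuclideanSpace ℂ (Fin N × W) → EuclideanSpace ℂ (Fin N × W))
    (hOr : ∀ r v, Or r v = v - (2 : ℂ) • Pr r v)
    (k : ℕ)
    (U : ℕ → EuclideanSpace ℂ (Fin N × W) ≃ₗᵢ[ℂ] EuclideanSpace ℂ (Fin N × W))
    (v₀ : EuclideanSpace ℂ (Fin N × W)) (hv₀ : ‖v₀‖ = 1)
    (ψ : Fin N → ℕ → EuclideanSpace ℂ (Fin N × W))
    (hψ0 : ∀ r, ψ r 0 = U 0 v₀)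
    (hψ : ∀ r j, ψ r (j + 1) = U (j + 1) (Or r (ψ r j)))
    (φ : ℕ → EuclideanSpace ℂ (Fin N × W))
    (hφ0 : φ 0 = U 0 v₀)
    (hφ : ∀ j, φ (j + 1) = U (j + 1) (φ j)) :
    ∃ r : Fin N, ‖ψ r k - φ k‖ ≤ 2 * (k : ℝ) / Real.sqrt N :=
  hybrid_exists_small_deviation_general N hN W Pr hPr Or hOr k U v₀ hv₀ ψ hψ0 hψ φ hφ0 hφ
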